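/- Let M = (S²×S²) \ {(u,v) : u₃ = 0 and v₃ ≥ 0} and let h : [−1,1] → ℝ be continuous, nonincreasing, with h ≥ 0 and h(z) = 0 if and only if z ≥ 0. Let F̃(u,v) = (u₃, (v₃+2)/(u₃²+h(v₃))). Then the image of F̃ equals the region {(x,y) ∈ ℝ² : 0 < |x| ≤ 1 and 1/(x²+h(−1)) ≤ y ≤ 3/x²} ∪ ({0} × [1/h(−1), ∞)). -/

import Mathlib

/-
The image of `F̃` only depends on the third coordinates `(u₃, v₃)`, which range over
`[-1,1]²` minus the segment `{0} × [0,1]`, so everything reduces to the planar map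
`(x, t) ↦ (x, (t + 2) / (x² + h t))`. Since `h` is antitone and vanishes exactly on `[0,1]`,
for fixed `x ≠ 0` the second component is squeezed between its values `1/(x² + h(-1))` at
`t = -1` and `3/x²` at `t = 1`, and for `x = 0` it is at least `1/h(-1)`. Conversely every value
in these ranges is attained by the intermediate value theorem applied to
`t ↦ y (x² + h t) - (t + 2)`, on `[-1,1]` when `x ≠ 0` and on `[-1,0]` when `x = 0`; in the latter
case the blow-up of `(t + 2)/h t` as `t → 0⁻` is encoded by the sign of this function at `t = 0`.
-/

open Set

noncomputable section

/-- The unit sphere in `ℝ³`. -/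
def S2 : Set (EuclideanSpace ℝ (Fin 3)) := {u | ‖u‖ = 1}

/-- `M = (S²×S²) \ {(u,v) : u₃ = 0 and v₃ ≥ 0}`. -/
def Msp : Set (EuclideanSpace ℝ (Fin 3) × EuclideanSpace ℝ (Fin 3)) :=
  (S2 ×ˢ S2) \ {p | p.1 2 = 0 ∧ 0 ≤ p.2 2}

lemma image_apply_two_S2 : (fun u : EuclideanSpace ℝ (Fin 3) => u 2) '' S2 = Icc (-1) 1 := by
  ext x
  constructor
  · rintro ⟨u, hu, rfl⟩
    rw [mem_Icc, ← abs_le, ← Real.norm_eq_abs, ← show ‖u‖ = 1 from hu]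
    exact PiLp.norm_apply_le u 2
  · intro hx
    have hsq : 0 ≤ 1 - x ^ 2 := by nlinarith [hx.1, hx.2]
    refine ⟨!₂[Real.sqrt (1 - x ^ 2), 0, x], ?_, rfl⟩
    simp [S2, EuclideanSpace.norm_eq, Fin.sum_univ_three, Real.sq_sqrt hsq]

lemma image_Msp :
    (fun p : EuclideanSpace ℝ (Fin 3) × EuclideanSpace ℝ (Fin 3) => (p.1 2, p.2 2)) '' Msp =
      (Icc (-1) 1 ×ˢ Icc (-1) 1) \ {q | q.1 = 0 ∧ 0 ≤ q.2} := by
  have hMsp : Msp = S2 ×ˢ S2 \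
      (fun p : EuclideanSpace ℝ (Fin 3) × EuclideanSpace ℝ (Fin 3) => (p.1 2, p.2 2)) ⁻¹'
        {q | q.1 = 0 ∧ 0 ≤ q.2} := rfl
  rw [hMsp, image_sdiff_preimage, ← image_apply_two_S2]
  exact congrArg (· \ _) (prod_image_image_eq (m₁ := fun u : EuclideanSpace ℝ (Fin 3) => u 2)
    (m₂ := fun u : EuclideanSpace ℝ (Fin 3) => u 2)).symm

lemma exists_div_eq_of_le_of_le {N D : ℝ → ℝ} {a b y : ℝ} (hab : a ≤ b)
    (hN : ContinuousOn N (Icc a b)) (hD : ContinuousOn D (Icc a b))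
    (hN_pos : ∀ t ∈ Icc a b, 0 < N t) (hy : 0 < y) (ha : N a ≤ y * D a) (hb : y * D b ≤ N b) :
    ∃ t ∈ Icc a b, 0 < D t ∧ N t / D t = y := by
  obtain ⟨t, ht, hroot⟩ := intermediate_value_Icc' hab ((hD.const_smul y).sub hN)
    (show (0 : ℝ) ∈ Icc (y * D b - N b) (y * D a - N a) from ⟨by linarith, by linarith⟩)
  have hyD : y * D t = N t := sub_eq_zero.1 hroot
  have hD_pos : 0 < D t := pos_of_mul_pos_right (hyD ▸ hN_pos t ht) hy.le
  exact ⟨t, ht, hD_pos, by rw [div_eq_iff hD_pos.ne', ← hyD, mul_comm]⟩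

namespace Ftilde

/-- `F̃(u, v) = planar h (u₃, v₃)`. -/
def planar (h : ℝ → ℝ) (q : ℝ × ℝ) : ℝ × ℝ := (q.1, (q.2 + 2) / (q.1 ^ 2 + h q.2))

def region (h : ℝ → ℝ) : Set (ℝ × ℝ) :=
  {p | 0 < |p.1| ∧ |p.1| ≤ 1 ∧ 1 / (p.1 ^ 2 + h (-1)) ≤ p.2 ∧ p.2 ≤ 3 / p.1 ^ 2} ∪
    ({0} ×ˢ Ici (1 / h (-1)))

variable {h : ℝ → ℝ} (hanti : AntitoneOn h (Icc (-1) 1))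
  (hzero : ∀ z ∈ Icc (-1 : ℝ) 1, (h z = 0 ↔ 0 ≤ z))
include hanti hzero

lemma apply_nonneg {t : ℝ} (ht : t ∈ Icc (-1) 1) : 0 ≤ h t := by
  have h_one : h 1 = 0 := (hzero 1 (right_mem_Icc.2 (by norm_num))).2 zero_le_one
  exact h_one ▸ hanti ht (right_mem_Icc.2 (by norm_num)) ht.2

lemma apply_pos_of_neg {t : ℝ} (ht : t ∈ Icc (-1) 1) (ht_neg : t < 0) : 0 < h t :=
  (apply_nonneg hanti hzero ht).lt_of_ne fun h_eq ↦
    ht_neg.not_ge ((hzero t ht).1 h_eq.symm)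

lemma planar_mem_region {x t : ℝ} (hx : x ∈ Icc (-1) 1) (ht : t ∈ Icc (-1) 1)
    (hxt : ¬(x = 0 ∧ 0 ≤ t)) : planar h (x, t) ∈ region h := by
  have h_le : h t ≤ h (-1) := hanti (left_mem_Icc.2 (by norm_num)) ht ht.1
  have lower (hD : 0 < x ^ 2 + h t) : 1 / (x ^ 2 + h (-1)) ≤ (t + 2) / (x ^ 2 + h t) :=
    div_le_div₀ (by linarith [ht.1]) (by linarith [ht.1]) hD (by linarith)
  simp only [planar, region, mem_union, mem_ofPred_eq, mem_prod, mem_singleton_iff, mem_Ici]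
  by_cases hx0 : x = 0
  · subst hx0
    have ht_pos : 0 < h t :=
      apply_pos_of_neg hanti hzero ht (not_le.1 fun ht_nonneg ↦ hxt ⟨rfl, ht_nonneg⟩)
    exact Or.inr ⟨rfl, by simpa using lower (by simpa using ht_pos)⟩
  · have hx_sq : 0 < x ^ 2 := by positivity
    have ht_nonneg : 0 ≤ h t := apply_nonneg hanti hzero ht
    have hD : 0 < x ^ 2 + h t := by linarith
    refine Or.inl ⟨abs_pos.2 hx0, abs_le.2 hx, lower hD, ?_⟩
    exact div_le_div₀ (by norm_num) (by linarith [ht.2]) hx_sq (by linarith)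

lemma exists_planar_eq_of_mem_region (hcont : ContinuousOn h (Icc (-1) 1)) {p : ℝ × ℝ}
    (hp : p ∈ region h) :
    ∃ x ∈ Icc (-1 : ℝ) 1, ∃ t ∈ Icc (-1 : ℝ) 1, ¬(x = 0 ∧ 0 ≤ t) ∧ planar h (x, t) = p := by
  have h_neg_one : 0 < h (-1) :=
    apply_pos_of_neg hanti hzero (left_mem_Icc.2 (by norm_num)) (by norm_num)
  obtain ⟨x, y⟩ := p
  rcases hp with ⟨hx0, hx1, hy_lower, hy_upper⟩ | ⟨rfl, hy⟩
  · dsimp only at hx0 hx1 hy_lower hy_upper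
    have hx_sq : 0 < x ^ 2 := sq_pos_of_ne_zero (abs_pos.1 hx0)
    have hA : 0 < x ^ 2 + h (-1) := by linarith
    have h_one : h 1 = 0 := (hzero 1 (right_mem_Icc.2 (by norm_num))).2 zero_le_one
    obtain ⟨t, ht, -, hty⟩ := exists_div_eq_of_le_of_le (N := (· + 2))
      (D := fun t ↦ x ^ 2 + h t) (by norm_num) (by fun_prop) (continuousOn_const.add hcont)
      (fun t ht ↦ by linarith [ht.1]) ((one_div_pos.2 hA).trans_le hy_lower)
      (by linarith [(div_le_iff₀ hA).1 hy_lower])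
      (by simp only [h_one]; linarith [(le_div_iff₀ hx_sq).1 hy_upper])
    exact ⟨x, abs_le.1 hx1, t, ht, fun hxt ↦ abs_pos.1 hx0 hxt.1, by simp only [planar, hty]⟩
  · have hsub : Icc (-1 : ℝ) 0 ⊆ Icc (-1) 1 := Icc_subset_Icc_right (by norm_num)
    have h_zero : h 0 = 0 := (hzero 0 (hsub (right_mem_Icc.2 (by norm_num)))).2 le_rfl
    obtain ⟨t, ht, ht_pos, hty⟩ := exists_div_eq_of_le_of_le (N := (· + 2)) (D := h)
      (by norm_num) (by fun_prop) (hcont.mono hsub) (fun t ht ↦ by linarith [ht.1])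
      ((one_div_pos.2 h_neg_one).trans_le hy) (by linarith [(div_le_iff₀ h_neg_one).1 hy])
      (by simp [h_zero])
    have ht_neg : t < 0 := not_le.1 fun h_nonneg ↦ ht_pos.ne' ((hzero t (hsub ht)).2 h_nonneg)
    exact ⟨0, ⟨by norm_num, by norm_num⟩, t, hsub ht, fun hxt ↦ ht_neg.not_ge hxt.2,
      by simp [planar, hty]⟩

lemma planar_image_eq_region (hcont : ContinuousOn h (Icc (-1) 1)) :
    planar h '' ((Icc (-1) 1 ×ˢ Icc (-1) 1) \ {q | q.1 = 0 ∧ 0 ≤ q.2}) = region h := by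
  refine Subset.antisymm ?_ fun p hp ↦ ?_
  · rintro _ ⟨⟨x, t⟩, ⟨⟨hx, ht⟩, hxt⟩, rfl⟩
    exact planar_mem_region hanti hzero hx ht hxt
  · obtain ⟨x, hx, t, ht, hxt, rfl⟩ := exists_planar_eq_of_mem_region hanti hzero hcont hp
    exact mem_image_of_mem _ ⟨⟨hx, ht⟩, hxt⟩

end Ftilde

theorem image_of_Ftilde_general (h : ℝ → ℝ)
    (hcont : ContinuousOn h (Icc (-1 : ℝ) 1))
    (hanti : AntitoneOn h (Icc (-1 : ℝ) 1))
    (hzero : ∀ z ∈ Icc (-1 : ℝ) 1, (h z = 0 ↔ 0 ≤ z)) :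
    Set.range (Msp.restrict fun p => (p.1 2, (p.2 2 + 2) / ((p.1 2) ^ 2 + h (p.2 2)))) =
      {p : ℝ × ℝ | 0 < |p.1| ∧ |p.1| ≤ 1 ∧
          1 / (p.1 ^ 2 + h (-1)) ≤ p.2 ∧ p.2 ≤ 3 / p.1 ^ 2} ∪
        ({0} ×ˢ Ici (1 / h (-1))) := by
  calc _ = Ftilde.planar h '' ((fun p : EuclideanSpace ℝ (Fin 3) × EuclideanSpace ℝ (Fin 3) =>
          (p.1 2, p.2 2)) '' Msp) := by rw [image_image]; exact range_domRestrict _ _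
    _ = Ftilde.region h := by rw [image_Msp, Ftilde.planar_image_eq_region hanti hzero hcont]

/-- Let `h : [−1,1] → ℝ` be continuous, nonincreasing, with `h ≥ 0` and
`h(z) = 0 ↔ z ≥ 0`, and let `F̃(u,v) = (u₃, (v₃+2)/(u₃²+h(v₃)))` on `M`. Then the image
of `F̃` equals
`{(x,y) : 0 < |x| ≤ 1, 1/(x²+h(−1)) ≤ y ≤ 3/x²} ∪ ({0} × [1/h(−1),∞))`. -/
theorem image_of_Ftilde (h : ℝ → ℝ)
    (hcont : ContinuousOn h (Icc (-1 : ℝ) 1))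
    (hanti : AntitoneOn h (Icc (-1 : ℝ) 1))
    (hnn : ∀ z ∈ Icc (-1 : ℝ) 1, 0 ≤ h z)
    (hzero : ∀ z ∈ Icc (-1 : ℝ) 1, (h z = 0 ↔ 0 ≤ z)) :
    Set.range (Msp.restrict fun p => (p.1 2, (p.2 2 + 2) / ((p.1 2) ^ 2 + h (p.2 2)))) =
      {p : ℝ × ℝ | 0 < |p.1| ∧ |p.1| ≤ 1 ∧
          1 / (p.1 ^ 2 + h (-1)) ≤ p.2 ∧ p.2 ≤ 3 / p.1 ^ 2} ∪
        ({0} ×ˢ Ici (1 / h (-1))) :=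
  image_of_Ftilde_general h hcont hanti hzero
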